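/- Let N be a positive integer and s a natural number with N ≤ 2^s. Then for every integer a, a^(s + λ(N)) ≡ a^s (mod N). -/
import Mathlib

private lemma nat_version (N s : ℕ) (hN : 0 < N) (hs : N ≤ 2 ^ s) (b : ℕ) :
    b ^ (s + Monoid.exponent (ZMod N)ˣ) ≡ b ^ s [MOD N] := by
  haveI : NeZero N := ⟨hN.ne'⟩
  set L := Monoid.exponent (ZMod N)ˣ with hL
  -- handle b = 0
  rcases Nat.eq_zero_or_pos b with rfl | hb
  · rcases Nat.eq_zero_or_pos s with rfl | hs0
    · have hN1 : N = 1 := le_antisymm (by simpa using hs) hN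
      subst hN1
      exact Nat.modEq_one
    · have h1 : (0:ℕ) ^ (s + L) = 0 := Nat.zero_pow (Nat.add_pos_left hs0 _)
      have h2 : (0:ℕ) ^ s = 0 := Nat.zero_pow hs0
      rw [h1, h2]
  · have hle : b ^ s ≤ b ^ (s + L) := Nat.pow_le_pow_right hb (Nat.le_add_right _ _)
    rw [Nat.ModEq.comm, Nat.modEq_iff_dvd' hle]
    rw [Nat.dvd_iff_prime_pow_dvd_dvd]
    intro p k pp hpk
    have pp' : p.Prime := pp
    have hpkN : p ^ k ∣ N := hpk
    have hks : k ≤ s := by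
      have h1 : 2 ^ k ≤ p ^ k := Nat.pow_le_pow_left pp'.two_le k
      have h2 : p ^ k ≤ N := Nat.le_of_dvd hN hpkN
      have : (2:ℕ) ^ k ≤ 2 ^ s := le_trans h1 (le_trans h2 hs)
      exact (Nat.pow_le_pow_iff_right (by norm_num)).mp this
    by_cases hpb : p ∣ b
    · have h1 : p ^ k ∣ b ^ s := dvd_trans (pow_dvd_pow_of_dvd hpb k)
        (pow_dvd_pow b hks)
      exact Nat.dvd_sub (dvd_trans h1 (pow_dvd_pow b (Nat.le_add_right _ _))) h1
    · -- coprime case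
      have hco : Nat.Coprime b (p ^ k) :=
        Nat.Coprime.pow_right k ((pp'.coprime_iff_not_dvd.mpr hpb).symm)
      haveI : NeZero (p ^ k) := ⟨pow_ne_zero k pp'.pos.ne'⟩
      let u : (ZMod (p ^ k))ˣ := ZMod.unitOfCoprime b hco
      have hexp : Monoid.exponent (ZMod (p ^ k))ˣ ∣ L := by
        rw [hL]
        exact MonoidHom.exponent_dvd (ZMod.unitsMap_surjective hpkN)
      have hu : u ^ L = 1 :=
        orderOf_dvd_iff_pow_eq_one.mp
          (dvd_trans (Monoid.order_dvd_exponent u) hexp)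
      have hcast : (b : ZMod (p ^ k)) ^ L = 1 := by
        have := congrArg (fun x : (ZMod (p ^ k))ˣ => (x : ZMod (p ^ k))) hu
        simpa [u, ZMod.coe_unitOfCoprime] using this
      have hmod : b ^ L ≡ 1 [MOD p ^ k] :=
        (ZMod.natCast_eq_natCast_iff _ _ _).mp (by push_cast; exact hcast)
      have : b ^ (s + L) ≡ b ^ s [MOD p ^ k] := by
        calc b ^ (s + L) = b ^ s * b ^ L := by rw [pow_add]
          _ ≡ b ^ s * 1 [MOD p ^ k] := Nat.ModEq.mul_left _ hmod
          _ = b ^ s := by ring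
      exact (Nat.modEq_iff_dvd' hle).mp this.symm

/-- If `N ≤ 2^s`, then `a^(s + λ(N)) ≡ a^s (mod N)` for every integer `a`. -/
theorem pow_add_carmichael_modEq (N s : ℕ) (hN : 0 < N) (hs : N ≤ 2 ^ s) :
    ∀ a : ℤ, a ^ (s + Monoid.exponent (ZMod N)ˣ) ≡ a ^ s [ZMOD (N : ℤ)] := by
  intro a
  have hN' : (N : ℤ) ≠ 0 := by exact_mod_cast hN.ne'
  set b : ℕ := (a % N).toNat with hb
  have hbz : (b : ℤ) = a % N := Int.toNat_of_nonneg (Int.emod_nonneg a hN')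
  have hab : a ≡ (b : ℤ) [ZMOD (N : ℤ)] := by
    rw [hbz]
    exact (Int.emod_emod_of_dvd a dvd_rfl).symm
  have hnat := nat_version N s hN hs b
  have hint : (b : ℤ) ^ (s + Monoid.exponent (ZMod N)ˣ) ≡ (b : ℤ) ^ s [ZMOD (N : ℤ)] := by
    have := Int.natCast_modEq_iff.mpr hnat
    push_cast at this
    exact this
  calc a ^ (s + Monoid.exponent (ZMod N)ˣ)
      ≡ (b : ℤ) ^ (s + Monoid.exponent (ZMod N)ˣ) [ZMOD (N : ℤ)] := hab.pow _
    _ ≡ (b : ℤ) ^ s [ZMOD (N : ℤ)] := hint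
    _ ≡ a ^ s [ZMOD (N : ℤ)] := (hab.pow _).symm
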